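/- Unbiasedness of the marginalized estimator: Let ρ be an n-qubit density matrix, p ∈ {X,Y,Z}^n a measurement string, and o ∈ {I,X,Y,Z}^n with o ▷ p. If the random outcome sign string q̂ ∈ {±1}^n has distribution Pr[q̂ = q] = tr(⊗_{j=1}^n ½(σ_I + q[j]σ_{p[j]}) ρ), then E[∏_{j : o[j]≠I} q̂[j]] = tr(O_o ρ), where O_o = ⊗_{j=1}^n σ_{o[j]}. -/

import Mathlib

/-! Both the sign weight `∏_{o k ≠ I} q k` and the effect `⊗_k ½(σ_I + q k σ_{p k})` are
products over the qubits, so `∑_q weight(q) • effect(q)` factorises into single-qubit sums.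
On a qubit with `o k = I` the two terms `±σ_p` cancel, leaving `σ_I`; on one with
`o k = p k` the two `±σ_I` cancel, leaving `σ_p`. Hence the sum is `O_o`, and the claim
follows by linearity of the trace. -/

inductive Pauli | I | X | Y | Z
deriving DecidableEq

instance : Fintype Pauli := ⟨{.I, .X, .Y, .Z}, by intro x; cases x <;> simp⟩

inductive Axis | X | Y | Z
deriving DecidableEq

instance : Fintype Axis := ⟨{.X, .Y, .Z}, by intro x; cases x <;> simp⟩

def Axis.toPauli : Axis → Pauli
  | .X => .X
  | .Y => .Y
  | .Z => .Z

/-- single-qubit hitting relation: `o = I` or `o = p`. -/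
def hit1 (o : Pauli) (p : Axis) : Prop := o = Pauli.I ∨ o = p.toPauli

instance (o : Pauli) (p : Axis) : Decidable (hit1 o p) := by unfold hit1; infer_instance

/-- `o ▷ p`: every coordinate of `o` is `I` or matches `p`. -/
def hits {n : ℕ} (o : Fin n → Pauli) (p : Fin n → Axis) : Prop := ∀ k, hit1 (o k) (p k)

instance {n : ℕ} (o : Fin n → Pauli) (p : Fin n → Axis) : Decidable (hits o p) := by
  unfold hits; infer_instance

/-- weight: number of non-identity coordinates. -/
def weight {n : ℕ} (o : Fin n → Pauli) : ℕ :=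
  (Finset.univ.filter (fun k => o k ≠ Pauli.I)).card

/-- hitting count of `o` among the measurements `P`. -/
def hitCount {n M : ℕ} (o : Fin n → Pauli) (P : Fin M → Fin n → Axis) : ℕ :=
  (Finset.univ.filter (fun m => hits o (P m))).card

/-- the confidence bound. -/
noncomputable def Conf {n M L : ℕ} (ε : ℝ) (O : Fin L → Fin n → Pauli)
    (P : Fin M → Fin n → Axis) : ℝ :=
  ∑ ℓ, Real.exp (-(ε ^ 2 / 2) * (hitCount (O ℓ) P))

open Matrix

/-- single-qubit Pauli matrices. -/
noncomputable def sigma : Pauli → Matrix (Fin 2) (Fin 2) ℂ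
  | .I => !![1, 0; 0, 1]
  | .X => !![0, 1; 1, 0]
  | .Y => !![0, -Complex.I; Complex.I, 0]
  | .Z => !![1, 0; 0, -1]

/-- tensor product of single-qubit Pauli matrices along a Pauli string. -/
noncomputable def pauliTensor {n : ℕ} (o : Fin n → Pauli) :
    Matrix (Fin n → Fin 2) (Fin n → Fin 2) ℂ :=
  fun i j => ∏ k, sigma (o k) (i k) (j k)

/-- ±1 sign associated to a boolean outcome. -/
def sgn (b : Bool) : ℂ := if b then 1 else -1

/-- projective measurement effect for a Pauli measurement `p` and outcome signs `q`. -/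
noncomputable def pauliEffect {n : ℕ} (p : Fin n → Axis) (q : Fin n → Bool) :
    Matrix (Fin n → Fin 2) (Fin n → Fin 2) ℂ :=
  fun i j => ∏ k,
    ((1 / 2 : ℂ) • (sigma Pauli.I + sgn (q k) • sigma ((p k).toPauli))) (i k) (j k)

noncomputable def qubitEffect (p : Axis) (b : Bool) : Matrix (Fin 2) (Fin 2) ℂ :=
  (1 / 2 : ℂ) • (sigma Pauli.I + sgn b • sigma p.toPauli)

def supportSign (o : Pauli) (b : Bool) : ℂ := if o ≠ Pauli.I then sgn b else 1

lemma pauliEffect_apply {n : ℕ} (p : Fin n → Axis) (q : Fin n → Bool) (i j : Fin n → Fin 2) :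
    pauliEffect p q i j = ∏ k, qubitEffect (p k) (q k) (i k) (j k) :=
  rfl

lemma sum_supportSign_smul_qubitEffect {o : Pauli} {p : Axis} (h : hit1 o p) :
    ∑ b : Bool, supportSign o b • qubitEffect p b = sigma o := by
  ext a c
  rcases h with rfl | rfl <;> cases p <;> fin_cases a <;> fin_cases c <;>
    simp [supportSign, qubitEffect, sigma, sgn, Axis.toPauli] <;> ring

lemma sum_sgn_smul_pauliEffect {n : ℕ} {p : Fin n → Axis} {o : Fin n → Pauli}
    (h : hits o p) :
    ∑ q : Fin n → Bool,
        (∏ k ∈ Finset.univ.filter (fun k => o k ≠ Pauli.I), sgn (q k)) • pauliEffect p q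
      = pauliTensor o := by
  ext i j
  have hfactor : ∀ q : Fin n → Bool,
      (∏ k ∈ Finset.univ.filter (fun k => o k ≠ Pauli.I), sgn (q k)) * pauliEffect p q i j
        = ∏ k, supportSign (o k) (q k) * qubitEffect (p k) (q k) (i k) (j k) := by
    intro q
    rw [pauliEffect_apply, Finset.prod_filter, ← Finset.prod_mul_distrib]
    rfl
  simp only [Matrix.sum_apply, Matrix.smul_apply, smul_eq_mul, hfactor]
  rw [← Fintype.prod_sum (fun k b => supportSign (o k) b * qubitEffect (p k) b (i k) (j k))]
  simp only [← smul_eq_mul, ← Matrix.smul_apply, ← Matrix.sum_apply,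
    sum_supportSign_smul_qubitEffect (h _)]
  rfl

/-- unbiasedness of the marginalized estimator — for `o ▷ p`, the expected
product of outcome signs on the support of `o` equals `tr(O_o ρ)`. -/
theorem stmt13 {n : ℕ} (ρ : Matrix (Fin n → Fin 2) (Fin n → Fin 2) ℂ)
    (p : Fin n → Axis) (o : Fin n → Pauli) (h : hits o p) :
    ∑ q : Fin n → Bool,
      (∏ k ∈ Finset.univ.filter (fun k => o k ≠ Pauli.I), sgn (q k))
        * Matrix.trace (pauliEffect p q * ρ)
      = Matrix.trace (pauliTensor o * ρ) := by
  simp only [← sum_sgn_smul_pauliEffect h, Matrix.sum_mul, Matrix.trace_sum, Matrix.smul_mul,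
    Matrix.trace_smul, smul_eq_mul]
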